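/- Let I be an ideal of A and G ⊆ I. Then G is an SG-basis for I if and only if for every h ∈ I, every final si-reductum of h via G is 0. -/

import Mathlib

/-!
Since `R` is a domain, `lt (a g) = lt a · lt g`, so the ideal `⟨Lt G⟩` of `R[Lt A]` consists of
the `R`-combinations `∑ lt (aᵢ gᵢ)` with `aᵢ ∈ A`, `gᵢ ∈ G`; when `lt h` is such a combination,
its summands of leading monomial `lp h` form an si-step of `h` at `lp h`. Si-reduction by
`G ⊆ I` stays in `I`, so if `G` is an SG-basis, a nonzero final reductum `h'` would have
`lt h' ∈ ⟨Lt I⟩ = ⟨Lt G⟩` and be reducible. Conversely, a nonzero `h ∈ I` is reducible: a step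
at `lp h` exhibits `lt h ∈ ⟨Lt G⟩`, while a step below `lp h` keeps `lt h` and cancels a term of
`h` without changing higher ones, which is a well-founded descent.
-/

open MvPolynomial

/-- A term order on the monomials (exponent vectors) of a polynomial ring in `n`
variables: a well-founded linear order compatible with multiplication of power
products (i.e. with addition of exponent vectors). -/
structure TermOrder (n : ℕ) where
  lo : LinearOrder (Fin n →₀ ℕ)
  wf : WellFounded lo.lt
  add_le_add : ∀ a b c : Fin n →₀ ℕ, lo.le a b → lo.le (a + c) (b + c)

namespace TermOrder

variable {n : ℕ} {R : Type*} [CommRing R]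

/-- `lp p`: the leading power product (exponent vector) of `p`; junk value `0`
for the zero polynomial. -/
noncomputable def lp (ord : TermOrder n) (p : MvPolynomial (Fin n) R) : Fin n →₀ ℕ :=
  WithBot.unbotD 0 (@Finset.max _ ord.lo p.support)

/-- `lc p`: the leading coefficient of `p` (0 if `p = 0`). -/
noncomputable def lc (ord : TermOrder n) (p : MvPolynomial (Fin n) R) : R :=
  p.coeff (ord.lp p)

/-- `ltm p`: the leading term `lc(p)·lp(p)` of `p` (0 if `p = 0`). -/
noncomputable def ltm (ord : TermOrder n) (p : MvPolynomial (Fin n) R) : MvPolynomial (Fin n) R :=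
  monomial (ord.lp p) (ord.lc p)

end TermOrder

variable {n : ℕ} {R : Type*} [CommRing R]

/-- An `F`-power product: a finite product `∏ fᵢ^{eᵢ}` with `fᵢ ∈ F`. -/
def IsPowerProduct (F : Set (MvPolynomial (Fin n) R)) (q : MvPolynomial (Fin n) R) : Prop :=
  ∃ e : MvPolynomial (Fin n) R →₀ ℕ, (e.support : Set (MvPolynomial (Fin n) R)) ⊆ F ∧
    q = e.prod (fun f k => f ^ k)

/-- `F` is a SAGBI basis for the `R`-subalgebra `A`: `R[Lt A] = R[Lt F]`. -/
def IsSAGBI (ord : TermOrder n) (A : Subalgebra R (MvPolynomial (Fin n) R))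
    (F : Set (MvPolynomial (Fin n) R)) : Prop :=
  Algebra.adjoin R (ord.ltm '' (A : Set (MvPolynomial (Fin n) R))) =
    Algebra.adjoin R (ord.ltm '' F)

/-- One step of s-reduction of `g` to `h` via `F`. -/
def SStep (ord : TermOrder n) (F : Set (MvPolynomial (Fin n) R))
    (g h : MvPolynomial (Fin n) R) : Prop :=
  ∃ (β : Fin n →₀ ℕ) (N : ℕ) (q : Fin N → MvPolynomial (Fin n) R) (r : Fin N → R),
    g.coeff β ≠ 0 ∧
    (∀ i, IsPowerProduct F (q i) ∧ q i ≠ 0 ∧ ord.lp (q i) = β) ∧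
    g.coeff β = ∑ i, r i * ord.lc (q i) ∧
    h = g - ∑ i, C (r i) * q i

/-- `g` s-reduces to `h` via `F`: a finite chain of one-step s-reductions. -/
def SReduce (ord : TermOrder n) (F : Set (MvPolynomial (Fin n) R)) :
    MvPolynomial (Fin n) R → MvPolynomial (Fin n) R → Prop :=
  Relation.ReflTransGen (SStep ord F)

/-- One step of si-reduction of `h` to `h'` via `G`, relative to the subalgebra `A`. -/
def SiStep (ord : TermOrder n) (A : Subalgebra R (MvPolynomial (Fin n) R))
    (G : Set (MvPolynomial (Fin n) R)) (h h' : MvPolynomial (Fin n) R) : Prop :=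
  ∃ (α : Fin n →₀ ℕ) (M : ℕ) (g a : Fin M → MvPolynomial (Fin n) R),
    h.coeff α ≠ 0 ∧
    (∀ i, g i ∈ G) ∧ (∀ i, a i ∈ A) ∧
    (∀ i, a i * g i ≠ 0 ∧ ord.lp (a i * g i) = α) ∧
    (monomial α (h.coeff α) : MvPolynomial (Fin n) R) = ∑ i, ord.ltm (a i * g i) ∧
    h' = h - ∑ i, a i * g i

/-- `h` si-reduces to `h'` via `G`: a finite chain of one-step si-reductions. -/
def SiReduce (ord : TermOrder n) (A : Subalgebra R (MvPolynomial (Fin n) R))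
    (G : Set (MvPolynomial (Fin n) R)) :
    MvPolynomial (Fin n) R → MvPolynomial (Fin n) R → Prop :=
  Relation.ReflTransGen (SiStep ord A G)

/-- The subalgebra `R[Lt A]` generated by the leading terms of elements of `A`. -/
noncomputable def LtAlg (ord : TermOrder n) (A : Subalgebra R (MvPolynomial (Fin n) R)) :
    Subalgebra R (MvPolynomial (Fin n) R) :=
  Algebra.adjoin R (ord.ltm '' (A : Set (MvPolynomial (Fin n) R)))

/-- The leading term of an element of `A`, as an element of `R[Lt A]`. -/
noncomputable def ltA (ord : TermOrder n) (A : Subalgebra R (MvPolynomial (Fin n) R))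
    (a : A) : LtAlg ord A :=
  ⟨ord.ltm (a : MvPolynomial (Fin n) R), Algebra.subset_adjoin ⟨a, a.2, rfl⟩⟩

/-- `G ⊆ I` is a SAGBI–Gröbner basis (SG-basis) for the ideal `I` of `A`:
`Lt G` generates the ideal `⟨Lt I⟩` in the subalgebra `R[Lt A]`. -/
def IsSGBasis (ord : TermOrder n) (A : Subalgebra R (MvPolynomial (Fin n) R))
    (I : Ideal A) (G : Set A) : Prop :=
  Ideal.span
      ((Subtype.val ⁻¹' (ord.ltm '' (Subtype.val '' G)) : Set (LtAlg ord A))) =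
  Ideal.span
      ((Subtype.val ⁻¹' (ord.ltm '' (Subtype.val '' (I : Set A))) : Set (LtAlg ord A)))


open Pointwise in
theorem Algebra.coe_mem_span_mul_of_mem_ideal_span {R B : Type*} [CommSemiring R]
    [CommSemiring B] [Algebra R B] (M : Submonoid B) {T : Set (Algebra.adjoin R (M : Set B))}
    {x : Algebra.adjoin R (M : Set B)} (hx : x ∈ Ideal.span T) :
    (x : B) ∈ Submodule.span R ((M : Set B) * ((↑) '' T)) := by
  induction hx using Submodule.span_induction with
  | mem t ht => exact Submodule.subset_span ⟨1, M.one_mem, t, ⟨t, ht, rfl⟩, one_mul _⟩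
  | zero => exact Submodule.zero_mem _
  | add x y _ _ hx hy => exact Submodule.add_mem _ hx hy
  | smul c x _ hx =>
    have hc : (c : B) ∈ Submodule.span R (M : Set B) := by
      have hspan := Algebra.adjoin_eq_span R (M : Set B)
      rw [Submonoid.closure_eq] at hspan
      exact hspan ▸ c.2
    have hcx := Submodule.mul_mem_mul hc hx
    rw [Submodule.span_mul_span, ← mul_assoc] at hcx
    refine Submodule.span_mono (Set.mul_subset_mul_right ?_) hcx
    exact Set.mul_subset_iff.2 fun a ha b hb => M.mul_mem ha hb

namespace MonomialOrder

open scoped MonomialOrder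

variable {σ S : Type*} [CommSemiring S] (m : MonomialOrder σ)

open Classical in
theorem monomial_coeff_leadingTerm (f : MvPolynomial σ S) (α : σ →₀ ℕ) :
    monomial α ((m.leadingTerm f).coeff α) =
      if m.degree f = α ∧ f ≠ 0 then m.leadingTerm f else 0 := by
  rcases eq_or_ne f 0 with rfl | hf
  · simp [leadingTerm_zero]
  rw [leadingTerm, coeff_monomial]
  by_cases h : m.degree f = α
  · simp [h, hf]
  · simp [h]

theorem leadingTerm_eq_of_coeff_eq {f g : MvPolynomial σ S} {α : σ →₀ ℕ}
    (hα : α ≺[m] m.degree f) (h : ∀ β, α ≺[m] β → g.coeff β = f.coeff β) :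
    m.leadingTerm g = m.leadingTerm f := by
  have hf : f ≠ 0 := by
    rintro rfl
    simp only [degree_zero, map_zero] at hα
    exact (m.zero_le _).not_gt hα
  have hdeg : m.degree g = m.degree f := by
    apply m.toSyn.injective
    apply le_antisymm
    · rw [degree_le_iff]
      intro β hβ
      by_contra! hlt
      rw [mem_support_iff, h β (hα.trans hlt)] at hβ
      exact hβ (m.coeff_eq_zero_of_lt hlt)
    · apply m.le_degree
      rw [mem_support_iff, h _ hα]
      exact m.coeff_degree_ne_zero_iff.2 hf
  rw [leadingTerm_eq_leadingTerm_iff, leadingCoeff, leadingCoeff, hdeg, h _ hα]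
  exact ⟨rfl, rfl⟩

def CancelsTermAt (α : σ →₀ ℕ) (p q : MvPolynomial σ S) : Prop :=
  p.coeff α ≠ 0 ∧ q.coeff α = 0 ∧ ∀ β, α ≺[m] β → q.coeff β = p.coeff β

/-- Cancelling a term lowers the support colexicographically, and the colexicographic order on
finitely supported functions over a well-order is well-founded. -/
theorem wellFounded_cancelsTermAt :
    WellFounded fun q p : MvPolynomial σ S => ∃ α, m.CancelsTermAt α p q := by
  classical
  let ind : MvPolynomial σ S → Colex (m.syn →₀ ℕ) := fun p =>
    toColex ((Finsupp.mapRange (fun c : S => if c = 0 then (0 : ℕ) else 1) (if_pos rfl)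
      (AddMonoidAlgebra.coeff p)).equivMapDomain m.toSyn.toEquiv)
  have ind_apply : ∀ p j, ofColex (ind p) j = if p.coeff (m.toSyn.symm j) = 0 then 0 else 1 :=
    fun _ _ => rfl
  refine Subrelation.wf ?_ (InvImage.wf ind wellFounded_lt)
  rintro q p ⟨α, hp, hq, hagree⟩
  refine Finsupp.Colex.lt_iff.2 ⟨m.toSyn α, fun j hj => ?_, ?_⟩
  · rw [ind_apply, ind_apply, hagree]
    simpa using hj
  · simp [ind_apply, hp, hq]

end MonomialOrder

namespace TermOrder

variable (ord : TermOrder n)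

/-- A copy of `Fin n →₀ ℕ` ordered by `ord`; the original type already carries the pointwise
order. -/
def Syn (_ : TermOrder n) : Type := Fin n →₀ ℕ

noncomputable instance : AddCommMonoid ord.Syn := inferInstanceAs (AddCommMonoid (Fin n →₀ ℕ))

instance : LinearOrder ord.Syn := ord.lo

instance : IsOrderedCancelAddMonoid ord.Syn where
  add_le_add_left a b h c := ord.add_le_add a b c h
  le_of_add_le_add_left a b c h := by
    by_contra! hcb
    have hle : a + c ≤ a + b := by
      rw [add_comm a c, add_comm a b]; exact ord.add_le_add c b a hcb.le
    have heq : a + c = a + b := le_antisymm hle h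
    exact hcb.ne (add_left_cancel (G := Fin n →₀ ℕ) heq)

instance : WellFoundedLT ord.Syn := ⟨ord.wf⟩

theorem zero_le_syn (a : ord.Syn) : 0 ≤ a := by
  by_contra! ha
  obtain ⟨k, hk⟩ := WellFounded.not_rel_apply_succ (r := (· < ·)) fun k : ℕ => k • a
  exact hk (by simpa [succ_nsmul] using add_lt_add_left ha (k • a))

noncomputable def toMonomialOrder : MonomialOrder (Fin n) where
  syn := ord.Syn
  toSyn := AddEquiv.refl _
  toSyn_monotone a b h := by
    obtain ⟨c, rfl⟩ := exists_add_of_le h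
    exact le_add_of_nonneg_right (α := ord.Syn) (ord.zero_le_syn c)

theorem lp_eq_degree (p : MvPolynomial (Fin n) R) : ord.lp p = ord.toMonomialOrder.degree p := by
  rcases eq_or_ne p 0 with rfl | hp
  · simp [lp]
  obtain ⟨μ, hμ⟩ := Finset.max_of_nonempty (α := ord.Syn) (support_nonempty.2 hp)
  have hlp : ord.lp p = μ := by
    change WithBot.unbotD (0 : ord.Syn) (Finset.max (α := ord.Syn) p.support) = μ
    rw [hμ]; rfl
  rw [hlp]
  change (μ : ord.Syn) = (ord.toMonomialOrder.degree p : ord.Syn)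
  apply le_antisymm
  · exact ord.toMonomialOrder.le_degree (Finset.mem_of_max (α := ord.Syn) hμ)
  · exact Finset.le_max_of_eq (α := ord.Syn) (ord.toMonomialOrder.degree_mem_support hp) hμ

theorem ltm_eq_leadingTerm (p : MvPolynomial (Fin n) R) :
    ord.ltm p = ord.toMonomialOrder.leadingTerm p := by
  rw [ltm, lc, lp_eq_degree]; rfl

end TermOrder

open TermOrder

section Reduction

variable {ord : TermOrder n} {A : Subalgebra R (MvPolynomial (Fin n) R)}
  {F : Set (MvPolynomial (Fin n) R)} {p q : MvPolynomial (Fin n) R}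

theorem siStep_of_monomial_eq_sum {ι : Type*} [Fintype ι] {α : Fin n →₀ ℕ}
    {a g : ι → MvPolynomial (Fin n) R} (hα : p.coeff α ≠ 0) (ha : ∀ i, a i ∈ A)
    (hg : ∀ i, g i ∈ F) (hlp : ∀ i, a i * g i ≠ 0 ∧ ord.lp (a i * g i) = α)
    (hsum : monomial α (p.coeff α) = ∑ i, ord.ltm (a i * g i)) :
    SiStep ord A F p (p - ∑ i, a i * g i) := by
  let e := (Fintype.equivFin ι).symm
  refine ⟨α, Fintype.card ι, g ∘ e, a ∘ e, hα, fun i => hg _, fun i => ha _, fun i => hlp _,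
    ?_, ?_⟩
  · rw [hsum]; exact (e.sum_comp fun i => ord.ltm (a i * g i)).symm
  · rw [← e.sum_comp fun i => a i * g i]; rfl

/-- The step is taken at the leading monomial, keeping the summands of that degree. -/
theorem exists_siStep_of_ltm_eq_sum {ι : Type*} [Fintype ι] (hp : p ≠ 0)
    {a g : ι → MvPolynomial (Fin n) R} (ha : ∀ i, a i ∈ A) (hg : ∀ i, g i ∈ F)
    (hsum : ord.ltm p = ∑ i, ord.ltm (a i * g i)) :
    ∃ q, SiStep ord A F p q := by
  classical
  set m := ord.toMonomialOrder
  let s := Finset.univ.filter fun i => m.degree (a i * g i) = m.degree p ∧ a i * g i ≠ 0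
  refine ⟨_, siStep_of_monomial_eq_sum (ι := s) (α := m.degree p) (a := fun i => a i)
    (g := fun i => g i) (m.coeff_degree_ne_zero_iff.2 hp) (fun i => ha i) (fun i => hg i)
    (fun i => ?_) ?_⟩
  · obtain ⟨hdeg, hne⟩ := (Finset.mem_filter.1 i.2).2
    exact ⟨hne, by rw [lp_eq_degree, hdeg]⟩
  · have hproj := congrArg (fun f => monomial (m.degree p) (f.coeff (m.degree p))) hsum
    simp only [ltm_eq_leadingTerm, coeff_sum, map_sum,
      MonomialOrder.monomial_coeff_leadingTerm] at hproj
    rw [if_pos ⟨rfl, hp⟩] at hproj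
    rw [Finset.sum_coe_sort s fun i => ord.ltm (a i * g i), Finset.sum_filter]
    simp only [ltm_eq_leadingTerm]
    convert hproj using 3
    rfl

theorem cancelsTermAt_of_monomial_eq_sum {ι : Type*} [Fintype ι] {α : Fin n →₀ ℕ}
    {a g : ι → MvPolynomial (Fin n) R} (hα : p.coeff α ≠ 0)
    (hlp : ∀ i, a i * g i ≠ 0 ∧ ord.lp (a i * g i) = α)
    (hsum : monomial α (p.coeff α) = ∑ i, ord.ltm (a i * g i)) :
    ord.toMonomialOrder.CancelsTermAt α p (p - ∑ i, a i * g i) := by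
  have hdeg : ∀ i, ord.toMonomialOrder.degree (a i * g i) = α := fun i =>
    (lp_eq_degree ord _).symm.trans (hlp i).2
  refine ⟨hα, ?_, fun β hβ => ?_⟩
  · have hcoeff := congrArg (coeff α) hsum
    simp only [coeff_monomial, coeff_sum, ltm_eq_leadingTerm, MonomialOrder.leadingTerm,
      MonomialOrder.leadingCoeff, hdeg, if_true] at hcoeff
    rw [coeff_sub, coeff_sum, hcoeff, sub_self]
  · have hzero : ∀ i, (a i * g i).coeff β = 0 := fun i =>
      MonomialOrder.coeff_eq_zero_of_lt (hdeg i ▸ hβ)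
    simp [coeff_sum, hzero]

theorem SiStep.mem_ideal {I : Ideal A} {G : Set A} (hGI : G ⊆ I)
    (hp : p ∈ Subtype.val '' (I : Set A)) (h : SiStep ord A (Subtype.val '' G) p q) :
    q ∈ Subtype.val '' (I : Set A) := by
  obtain ⟨k, hk, rfl⟩ := hp
  obtain ⟨α, M, g, a, -, hg, ha, -, -, rfl⟩ := h
  choose g' hg' hgg' using hg
  refine ⟨k - ∑ i, ⟨a i, ha i⟩ * g' i,
    I.sub_mem hk (I.sum_mem fun i _ => I.mul_mem_left _ (hGI (hg' i))), ?_⟩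
  simp [hgg']

theorem SiReduce.mem_ideal {I : Ideal A} {G : Set A} (hGI : G ⊆ I)
    (hp : p ∈ Subtype.val '' (I : Set A)) (h : SiReduce ord A (Subtype.val '' G) p q) :
    q ∈ Subtype.val '' (I : Set A) := by
  induction h with
  | refl => exact hp
  | tail _ hstep ih => exact hstep.mem_ideal hGI ih

end Reduction

/-- `⟨Lt F⟩`, the ideal of `R[Lt A]` generated by the leading terms of `F`. -/
noncomputable def leadingIdeal (ord : TermOrder n) (A : Subalgebra R (MvPolynomial (Fin n) R))
    (F : Set (MvPolynomial (Fin n) R)) : Ideal (LtAlg ord A) :=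
  Ideal.span (Subtype.val ⁻¹' (ord.ltm '' F))

section LeadingIdeal

variable [NoZeroDivisors R] {ord : TermOrder n} {A : Subalgebra R (MvPolynomial (Fin n) R)}
  {F : Set (MvPolynomial (Fin n) R)} {p : MvPolynomial (Fin n) R}

variable (ord A) in
noncomputable def ltmSubmonoid : Submonoid (MvPolynomial (Fin n) R) where
  carrier := ord.ltm '' A
  one_mem' := ⟨1, A.one_mem, by rw [ltm_eq_leadingTerm, ← C_1, MonomialOrder.leadingTerm_C]⟩
  mul_mem' := by
    rintro _ _ ⟨a, ha, rfl⟩ ⟨b, hb, rfl⟩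
    exact ⟨a * b, A.mul_mem ha hb, by simp [ltm_eq_leadingTerm]⟩

theorem exists_sum_ltm_eq_of_mem_leadingIdeal {x : LtAlg ord A}
    (hx : x ∈ leadingIdeal ord A F) :
    ∃ (M : ℕ) (a g : Fin M → MvPolynomial (Fin n) R), (∀ i, a i ∈ A) ∧ (∀ i, g i ∈ F) ∧
      (x : MvPolynomial (Fin n) R) = ∑ i, ord.ltm (a i * g i) := by
  obtain ⟨M, r, y, hy⟩ := Submodule.mem_span_set'.1
    (Algebra.coe_mem_span_mul_of_mem_ideal_span (ltmSubmonoid ord A) hx)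
  have hfactor : ∀ i, ∃ a g, a ∈ A ∧ g ∈ F ∧ ord.ltm a * ord.ltm g = y i := by
    intro i
    obtain ⟨_, ⟨a, ha, rfl⟩, _, ⟨_, ⟨g, hg, hgx⟩, rfl⟩, hy⟩ := (y i).2
    exact ⟨a, g, ha, hg, hgx ▸ hy⟩
  choose a g ha hg hag using hfactor
  refine ⟨M, fun i => r i • a i, g, fun i => A.smul_mem (ha i) (r i), hg, ?_⟩
  rw [← hy]
  refine Finset.sum_congr rfl fun i _ => ?_
  simp [← hag, ltm_eq_leadingTerm, smul_eq_C_mul, mul_assoc]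

theorem mem_leadingIdeal_of_coe_eq_sum {ι : Type*} [Fintype ι] (hFA : F ⊆ A)
    {a g : ι → MvPolynomial (Fin n) R} (ha : ∀ i, a i ∈ A) (hg : ∀ i, g i ∈ F)
    {x : LtAlg ord A} (hx : (x : MvPolynomial (Fin n) R) = ∑ i, ord.ltm (a i * g i)) :
    x ∈ leadingIdeal ord A F := by
  have hx' : x = ∑ i, ltA ord A ⟨a i, ha i⟩ * ltA ord A ⟨g i, hFA (hg i)⟩ :=
    Subtype.ext (by simp [hx, ltA, ltm_eq_leadingTerm])
  rw [hx']
  exact Ideal.sum_mem _ fun i _ => Ideal.mul_mem_left _ _ (Ideal.subset_span ⟨g i, hg i, rfl⟩)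

theorem exists_siStep_of_mem_leadingIdeal (hp : p ≠ 0) {x : LtAlg ord A}
    (hx : x ∈ leadingIdeal ord A F) (hxp : (x : MvPolynomial (Fin n) R) = ord.ltm p) :
    ∃ q, SiStep ord A F p q := by
  obtain ⟨M, a, g, ha, hg, hsum⟩ := exists_sum_ltm_eq_of_mem_leadingIdeal hx
  exact exists_siStep_of_ltm_eq_sum hp ha hg (hxp ▸ hsum)

theorem mem_leadingIdeal_of_forall_irreducible_eq_zero {I : Ideal A} {G : Set A}
    (hGI : G ⊆ I)
    (hirr : ∀ p ∈ Subtype.val '' (I : Set A),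
      (∀ q, ¬ SiStep ord A (Subtype.val '' G) p q) → p = 0)
    (hp : p ∈ Subtype.val '' (I : Set A)) {x : LtAlg ord A}
    (hx : (x : MvPolynomial (Fin n) R) = ord.ltm p) :
    x ∈ leadingIdeal ord A (Subtype.val '' G) := by
  induction p using ord.toMonomialOrder.wellFounded_cancelsTermAt.induction generalizing x with
  | _ p ih =>
  rcases eq_or_ne p 0 with rfl | hp0
  · obtain rfl : x = 0 := Subtype.ext (by simp [hx, ltm_eq_leadingTerm])
    exact zero_mem _
  obtain ⟨q, hpq⟩ : ∃ q, SiStep ord A (Subtype.val '' G) p q := by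
    by_contra! h
    exact hp0 (hirr p hp h)
  obtain ⟨α, M, g, a, hα, hg, ha, hlp, hsum, rfl⟩ := id hpq
  have hcancel := cancelsTermAt_of_monomial_eq_sum hα hlp hsum
  rcases (ord.toMonomialOrder.le_degree (mem_support_iff.2 hα)).lt_or_eq with hlt | heq
  · refine ih _ ⟨α, hcancel⟩ (hpq.mem_ideal hGI hp) (hx.trans ?_)
    rw [ltm_eq_leadingTerm, ltm_eq_leadingTerm]
    exact (MonomialOrder.leadingTerm_eq_of_coeff_eq _ hlt hcancel.2.2).symm
  · refine mem_leadingIdeal_of_coe_eq_sum ?_ ha hg (hx.trans ?_)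
    · rintro _ ⟨g, -, rfl⟩
      exact g.2
    · rw [← hsum, ltm_eq_leadingTerm, ord.toMonomialOrder.toSyn.injective heq]
      rfl

end LeadingIdeal

theorem isSGBasis_iff_final_sireductum_eq_zero_general {n : ℕ} {R : Type*} [CommRing R]
    [IsDomain R] (ord : TermOrder n)
    (A : Subalgebra R (MvPolynomial (Fin n) R)) (I : Ideal A) (G : Set A)
    (hGI : G ⊆ (I : Set A)) :
    IsSGBasis ord A I G ↔
      ∀ h : A, h ∈ I → ∀ h' : MvPolynomial (Fin n) R,
        SiReduce ord A (Subtype.val '' G) (h : MvPolynomial (Fin n) R) h' →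
        (∀ h'' : MvPolynomial (Fin n) R, ¬ SiStep ord A (Subtype.val '' G) h' h'') →
        h' = 0 := by
  change leadingIdeal ord A _ = leadingIdeal ord A _ ↔ _
  constructor
  · intro hSG h hI h' hred hfinal
    by_contra hne
    obtain ⟨k, hk, rfl⟩ := hred.mem_ideal hGI ⟨h, hI, rfl⟩
    have hlt : ltA ord A k ∈ leadingIdeal ord A (Subtype.val '' G) :=
      hSG ▸ Ideal.subset_span ⟨k, ⟨k, hk, rfl⟩, rfl⟩
    obtain ⟨q, hq⟩ := exists_siStep_of_mem_leadingIdeal hne hlt rfl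
    exact hfinal q hq
  · intro hred
    refine le_antisymm (Ideal.span_mono (Set.preimage_mono (Set.image_mono
      (Set.image_mono hGI)))) (Ideal.span_le.2 ?_)
    rintro x ⟨p, hp, hx⟩
    refine mem_leadingIdeal_of_forall_irreducible_eq_zero hGI ?_ hp hx.symm
    rintro _ ⟨k, hk, rfl⟩ hirr
    exact hred k hk _ .refl hirr

/-- `G ⊆ I` is an SG-basis for the ideal `I` of `A` iff for every
`h ∈ I`, every final si-reductum of `h` via `G` is `0`. -/
theorem isSGBasis_iff_final_sireductum_eq_zero {n : ℕ} {R : Type*} [CommRing R]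
    [IsDomain R] [IsNoetherianRing R] (ord : TermOrder n)
    (A : Subalgebra R (MvPolynomial (Fin n) R)) (I : Ideal A) (G : Set A)
    (hGI : G ⊆ (I : Set A)) :
    IsSGBasis ord A I G ↔
      ∀ h : A, h ∈ I → ∀ h' : MvPolynomial (Fin n) R,
        SiReduce ord A (Subtype.val '' G) (h : MvPolynomial (Fin n) R) h' →
        (∀ h'' : MvPolynomial (Fin n) R, ¬ SiStep ord A (Subtype.val '' G) h' h'') →
        h' = 0 :=
  isSGBasis_iff_final_sireductum_eq_zero_general ord A I G hGI
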